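/- arXiv:1904.08261 — 6 statements merged into one kernel-verified Lean document; each statement's English description precedes it below -/
import Mathlib

section
/- Let ρ be a d×d complex positive semidefinite matrix and w a d×d unitary matrix with ρ·(w·ρ·wᴴ) = 0. Then for every eigenvector v of ρ with nonzero eigenvalue (ρ.mulVec v = c • v with c ≠ 0), the diagonal matrix element of w vanishes: star v ⬝ᵥ (w.mulVec v) = 0. -/
open Matrix ComplexOrder

/-- If `ρ` is positive semidefinite, `w` is unitary, and the strict orthogonality
condition `ρ * (w * ρ * wᴴ) = 0` holds, then every eigenvector of `ρ` with nonzero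
eigenvalue has vanishing diagonal matrix element of `w`: `⟨v|w|v⟩ = 0`. -/
theorem stmt_3 {d : ℕ} (ρ w : Matrix (Fin d) (Fin d) ℂ)
    (hρ : ρ.PosSemidef) (hw : wᴴ * w = 1)
    (horth : ρ * (w * ρ * wᴴ) = 0) :
    ∀ (v : Fin d → ℂ) (c : ℂ), c ≠ 0 → ρ.mulVec v = c • v →
      star v ⬝ᵥ w.mulVec v = 0 := by
  intro v c hc hv
  set x : Fin d → ℂ := wᴴ.mulVec v with hx
  -- star v ᵥ* ρ = star (ρ.mulVec v)
  have hherm : ρᴴ = ρ := hρ.1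
  have hrow : ρ.vecMul (star v) = star c • star v := by
    have : ρ.vecMul (star v) = star (ρ.mulVec v) := by
      rw [star_mulVec, hherm]
    rw [this, hv, star_smul]
  -- quadratic form of ρ at x vanishes
  have hq : star x ⬝ᵥ ρ.mulVec x = 0 := by
    have h0 : star v ⬝ᵥ (ρ * (w * ρ * wᴴ)).mulVec v = 0 := by
      rw [horth, zero_mulVec, dotProduct_zero]
    have h1 : star v ⬝ᵥ (ρ * (w * ρ * wᴴ)).mulVec v
        = star c * (star x ⬝ᵥ ρ.mulVec x) := by
      rw [← mulVec_mulVec, dotProduct_mulVec, hrow, smul_dotProduct,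
        smul_eq_mul]
      congr 1
      rw [Matrix.mul_assoc, ← mulVec_mulVec, dotProduct_mulVec,
        ← mulVec_mulVec]
      congr 1
      · rw [hx, star_mulVec, conjTranspose_conjTranspose]
    have := h0 ▸ h1
    exact (mul_eq_zero.mp this.symm).resolve_left (star_ne_zero.mpr hc)
  have hzero : ρ.mulVec x = 0 := (hρ.dotProduct_mulVec_zero_iff x).mp hq
  have h4 : star x ⬝ᵥ v = star v ⬝ᵥ w.mulVec v := by
    rw [hx, star_mulVec, conjTranspose_conjTranspose, ← dotProduct_mulVec]
  clear_value x
  clear hx hq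
  -- now star x ⬝ᵥ v = 0
  have h2 : star x ⬝ᵥ ρ.mulVec v = 0 := by
    rw [dotProduct_mulVec]
    have : ρ.vecMul (star x) = star (ρ.mulVec x) := by
      rw [star_mulVec, hherm]
    rw [this, hzero, star_zero, zero_dotProduct]
  rw [hv, dotProduct_smul, smul_eq_mul] at h2
  have h3 : star x ⬝ᵥ v = 0 := (mul_eq_zero.mp h2).resolve_left hc
  rw [← h4]
  exact h3
end

section
/- Let ρ be a d×d complex positive semidefinite matrix and w a d×d unitary matrix such that ρ·(w·ρ·wᴴ) = 0. Then twice the rank of ρ is at most d: 2 · ρ.rank ≤ d. -/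
open Matrix ComplexOrder

namespace Matrix

theorem rank_mul_mul_eq_of_mul_eq_one {n R : Type*} [Fintype n] [DecidableEq n] [CommRing R]
    {A B : Matrix n n R} (M : Matrix n n R) (hBA : B * A = 1) :
    (A * M * B).rank = M.rank := by
  rw [rank_mul_eq_left_of_isUnit_det B _ (isUnit_det_of_right_inverse hBA),
    rank_mul_eq_right_of_isUnit_det A M (isUnit_det_of_left_inverse hBA)]

end Matrix

theorem stmt_5_general {d : ℕ} (ρ w : Matrix (Fin d) (Fin d) ℂ)
    (hw : wᴴ * w = 1)
    (horth : ρ * (w * ρ * wᴴ) = 0) :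
    2 * ρ.rank ≤ d := by
  have h := rank_add_rank_le_card_of_mul_eq_zero horth
  rw [rank_mul_mul_eq_of_mul_eq_one ρ hw, Fintype.card_fin] at h
  omega

/-- If `ρ` is positive semidefinite, `w` is unitary, and the strict orthogonality
condition `ρ * (w * ρ * wᴴ) = 0` holds, then twice the rank of `ρ` is at most `d`. -/
theorem stmt_5 {d : ℕ} (ρ w : Matrix (Fin d) (Fin d) ℂ)
    (hρ : ρ.PosSemidef) (hw : wᴴ * w = 1)
    (horth : ρ * (w * ρ * wᴴ) = 0) :
    2 * ρ.rank ≤ d :=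
  stmt_5_general ρ w hw horth
end

section
/- Let ρ be a density matrix on ℂ^d and w a d×d unitary matrix such that ρ·(w·ρ·wᴴ) = 0. Then the purity of ρ satisfies (Matrix.trace (ρ·ρ)).re ≥ 2 / d. -/
open Matrix ComplexOrder

lemma trace_sq_cs {n : ℕ} (A : Matrix (Fin n) (Fin n) ℂ) (hA : A.IsHermitian) :
    ((A.trace).re) ^ 2 ≤ (n : ℝ) * ((A * A).trace).re := by
  have h1 : ((A * A).trace).re = ∑ i, ∑ j, Complex.normSq (A j i) := by
    nth_rewrite 1 [← hA.eq]
    simp [Matrix.trace, Matrix.diag, Matrix.mul_apply, Complex.re_sum,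
      Matrix.conjTranspose_apply, Complex.normSq_apply, Complex.mul_re]
  have h2 : (A.trace).re = ∑ i, (A i i).re := by
    simp [Matrix.trace, Matrix.diag, Complex.re_sum]
  rw [h1, h2]
  calc (∑ i, (A i i).re) ^ 2 ≤ (n : ℝ) * ∑ i, (A i i).re ^ 2 := by
        simpa using sq_sum_le_card_mul_sum_sq (s := Finset.univ)
          (f := fun i => (A i i).re)
    _ ≤ (n : ℝ) * ∑ i, ∑ j, Complex.normSq (A j i) := by
        apply mul_le_mul_of_nonneg_left _ (Nat.cast_nonneg n)
        apply Finset.sum_le_sum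
        intro i _
        calc (A i i).re ^ 2 ≤ Complex.normSq (A i i) := by
              rw [Complex.normSq_apply]; nlinarith [sq_nonneg (A i i).im]
          _ ≤ ∑ j, Complex.normSq (A j i) :=
              Finset.single_le_sum (f := fun j => Complex.normSq (A j i))
                (fun j _ => Complex.normSq_nonneg _) (Finset.mem_univ i)

/-- If `ρ` is a density matrix on `ℂ^d`, `w` is unitary and the strict orthogonality
condition `ρ * (w * ρ * wᴴ) = 0` holds, then the purity of `ρ` is at least `2 / d`. -/
theorem stmt_7 {d : ℕ} (ρ w : Matrix (Fin d) (Fin d) ℂ)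
    (hρ : ρ.PosSemidef) (htr : ρ.trace = 1) (hw : wᴴ * w = 1)
    (horth : ρ * (w * ρ * wᴴ) = 0) :
    ((ρ * ρ).trace).re ≥ 2 / (d : ℝ) := by
  have hd : 0 < d := by
    by_contra h
    interval_cases d
    simp [Matrix.trace] at htr
  set σ := w * ρ * wᴴ with hσdef
  have hσ : σ.PosSemidef := hρ.mul_mul_conjTranspose_same w
  have hσρ : σ * ρ = 0 := by
    have := congrArg Matrix.conjTranspose horth
    simpa [Matrix.conjTranspose_mul, hρ.isHermitian.eq, hσ.isHermitian.eq] using this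
  have htrσ : σ.trace = 1 := by
    rw [hσdef, Matrix.trace_mul_cycle, hw, Matrix.one_mul, htr]
  have htrσσ : (σ * σ).trace = (ρ * ρ).trace := by
    have : σ * σ = w * (ρ * ρ) * wᴴ := by
      rw [hσdef]
      calc w * ρ * wᴴ * (w * ρ * wᴴ) = w * ρ * (wᴴ * w) * ρ * wᴴ := by
            noncomm_ring
        _ = w * (ρ * ρ) * wᴴ := by rw [hw]; noncomm_ring
    rw [this, Matrix.trace_mul_cycle, hw, Matrix.one_mul]
  set A := ρ + σ with hAdef
  have hA : A.IsHermitian := hρ.isHermitian.add hσ.isHermitian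
  have htrA : A.trace = 2 := by
    rw [hAdef, Matrix.trace_add, htr, htrσ]; norm_num
  have hAA : (A * A).trace = 2 * (ρ * ρ).trace := by
    have : A * A = ρ * ρ + σ * σ := by
      rw [hAdef, add_mul, mul_add, mul_add, horth, hσρ]
      simp
    rw [this, Matrix.trace_add, htrσσ]; ring
  have key := trace_sq_cs A hA
  rw [htrA, hAA] at key
  have : ((2 : ℂ) * (ρ * ρ).trace).re = 2 * ((ρ * ρ).trace).re := by
    simp [Complex.mul_re]
  rw [this] at key
  norm_num at key
  rw [ge_iff_le, div_le_iff₀ (by positivity)]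
  nlinarith [key]
end

section
/- Let d ≤ 3, let ρ be a density matrix on ℂ^d, and let w be a d×d unitary matrix such that ρ·(w·ρ·wᴴ) = 0. Then ρ has rank 1, i.e. ρ is a pure state; equivalently Matrix.trace (ρ·ρ) = 1 and ρ·ρ = ρ. -/
/-!
Conjugating by a unitary preserves rank, so `ρ * (w ρ wᴴ) = 0` and Sylvester's inequality give
`2 · rank ρ ≤ d ≤ 3`; as `tr ρ = 1` forces `ρ ≠ 0`, the rank is exactly one. A Hermitian matrix
of rank one has a single nonzero eigenvalue, which must then equal the trace `1`; with spectrum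
in `{0, 1}` it is idempotent.
-/

open Matrix ComplexOrder

namespace Matrix

variable {m n : Type*} [Fintype n] [DecidableEq n]

theorem rank_eq_zero_iff {R : Type*} [Field R] [Fintype m] {A : Matrix m n R} :
    A.rank = 0 ↔ A = 0 := by
  rw [rank, Submodule.finrank_eq_zero, LinearMap.range_eq_bot, ← toLin'_apply',
    LinearEquiv.map_eq_zero_iff]

theorem rank_conj_eq_of_conjTranspose_mul_self_eq_one {R : Type*} [CommRing R] [StarRing R]
    {w : Matrix n n R} (hw : wᴴ * w = 1) (A : Matrix n n R) :
    (w * A * wᴴ).rank = A.rank := by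
  rw [rank_mul_eq_left_of_isUnit_det _ _ (isUnit_det_of_right_inverse hw),
    rank_mul_eq_right_of_isUnit_det _ _ (isUnit_det_of_left_inverse hw)]

theorem two_mul_rank_le_card_of_mul_conj_eq_zero {R : Type*} [Field R] [StarRing R]
    {A w : Matrix n n R} (hw : wᴴ * w = 1) (h : A * (w * A * wᴴ) = 0) :
    2 * A.rank ≤ Fintype.card n := by
  have := rank_add_rank_le_card_of_mul_eq_zero h
  rw [rank_conj_eq_of_conjTranspose_mul_self_eq_one hw] at this
  omega

end Matrix

theorem Fintype.apply_eq_zero_or_eq_sum_of_card_ne_zero_eq_one {ι M : Type*} [Fintype ι]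
    [AddCommMonoid M] {f : ι → M} [DecidablePred fun i ↦ f i ≠ 0]
    (h : Fintype.card {i // f i ≠ 0} = 1) (i : ι) :
    f i = 0 ∨ f i = ∑ j, f j := by
  obtain ⟨⟨x, _⟩, hunique⟩ := Fintype.card_eq_one_iff.mp h
  have hzero : ∀ j ≠ x, f j = 0 := fun j hj ↦ by
    by_contra hfj
    exact hj (congrArg Subtype.val (hunique ⟨j, hfj⟩))
  rw [Finset.sum_eq_single x (fun j _ ↦ hzero j) (by simp)]
  by_cases hix : i = x
  · exact .inr (hix ▸ rfl)
  · exact .inl (hzero i hix)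

namespace Matrix.IsHermitian

variable {𝕜 n : Type*} [RCLike 𝕜] [Fintype n] [DecidableEq n] {A : Matrix n n 𝕜}

theorem isIdempotentElem_of_rank_eq_one_of_trace_eq_one (hA : A.IsHermitian)
    (hr : A.rank = 1) (ht : A.trace = 1) : IsIdempotentElem A := by
  have hsum : ∑ i, hA.eigenvalues i = 1 := by
    exact_mod_cast hA.trace_eq_sum_eigenvalues.symm.trans ht
  rw [isIdempotentElem_iff_spectrum_subset ℝ A hA, hA.spectrum_real_eq_range_eigenvalues]
  rintro _ ⟨i, rfl⟩
  rw [hA.rank_eq_card_non_zero_eigs] at hr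
  simpa [hsum] using Fintype.apply_eq_zero_or_eq_sum_of_card_ne_zero_eq_one hr i

end Matrix.IsHermitian

/-- For `d ≤ 3`, if `ρ` is a density matrix on `ℂ^d`, `w` is unitary and the strict
orthogonality condition `ρ * (w * ρ * wᴴ) = 0` holds, then `ρ` is a pure state:
it has rank 1, unit purity, and is idempotent. -/
theorem stmt_8 {d : ℕ} (hd : d ≤ 3) (ρ w : Matrix (Fin d) (Fin d) ℂ)
    (hρ : ρ.PosSemidef) (htr : ρ.trace = 1) (hw : wᴴ * w = 1)
    (horth : ρ * (w * ρ * wᴴ) = 0) :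
    ρ.rank = 1 ∧ (ρ * ρ).trace = 1 ∧ ρ * ρ = ρ := by
  have hrank_le : 2 * ρ.rank ≤ d := by
    simpa using two_mul_rank_le_card_of_mul_conj_eq_zero hw horth
  have hrank_ne : ρ.rank ≠ 0 := by
    rw [Ne, Matrix.rank_eq_zero_iff]
    rintro rfl
    simp at htr
  have hrank : ρ.rank = 1 := by omega
  have hidem : ρ * ρ = ρ :=
    hρ.isHermitian.isIdempotentElem_of_rank_eq_one_of_trace_eq_one hrank htr
  exact ⟨hrank, by rw [hidem, htr], hidem⟩
end

section
/- Let ρ be a density matrix on ℂ^d and w a d×d unitary matrix such that ρ·(w·ρ·wᴴ) = 0. Then Matrix.trace (w·ρ) = 0. -/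
/-!
Unitarity turns the orthogonality condition into `ρ w ρ = 0`. Writing `ρ = Bᴴ B`, the factors
`Bᴴ B` on either side can be cancelled down to `B w Bᴴ = 0`, because `X Bᴴ B = 0 ↔ X Bᴴ = 0`
and `Bᴴ B Y = 0 ↔ B Y = 0`; and `Tr (w ρ) = Tr (B w Bᴴ)` by cyclicity of the trace.
-/

open Matrix ComplexOrder

open scoped MatrixOrder in
theorem Matrix.PosSemidef.trace_mul_eq_zero_of_mul_mul_eq_zero {n 𝕜 : Type*} [Fintype n]
    [RCLike 𝕜] {ρ A : Matrix n n 𝕜} (hρ : ρ.PosSemidef) (h : ρ * A * ρ = 0) :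
    (A * ρ).trace = 0 := by
  classical
  obtain ⟨B, rfl⟩ := CStarAlgebra.nonneg_iff_eq_star_mul_self.mp hρ.nonneg
  rw [star_eq_conjTranspose] at h ⊢
  have hBAB : B * (A * Bᴴ) = 0 := by
    rwa [mul_conjTranspose_mul_self_eq_zero, Matrix.mul_assoc,
      conjTranspose_mul_self_mul_eq_zero] at h
  rw [← Matrix.mul_assoc, trace_mul_comm, hBAB, trace_zero]

theorem stmt_9_general {d : ℕ} (ρ w : Matrix (Fin d) (Fin d) ℂ)
    (hρ : ρ.PosSemidef) (hw : wᴴ * w = 1)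
    (horth : ρ * (w * ρ * wᴴ) = 0) :
    (w * ρ).trace = 0 := by
  refine hρ.trace_mul_eq_zero_of_mul_mul_eq_zero ?_
  calc ρ * w * ρ = ρ * (w * ρ * wᴴ) * w := by simp only [Matrix.mul_assoc, hw, Matrix.mul_one]
    _ = 0 := by rw [horth, Matrix.zero_mul]

/-- If `ρ` is a density matrix on `ℂ^d`, `w` is unitary and the strict orthogonality
condition `ρ * (w * ρ * wᴴ) = 0` holds, then the decoherence factor vanishes:
`Tr(w * ρ) = 0`. -/
theorem stmt_9 {d : ℕ} (ρ w : Matrix (Fin d) (Fin d) ℂ)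
    (hρ : ρ.PosSemidef) (htr : ρ.trace = 1) (hw : wᴴ * w = 1)
    (horth : ρ * (w * ρ * wᴴ) = 0) :
    (w * ρ).trace = 0 :=
  stmt_9_general ρ w hρ hw horth
end

section
/- Let a₀, a₁ ∈ ℂ with |a₀|² + |a₁|² = 1, let e₀, e₁ be the standard basis of ℂ², let w₀, w₁ be d×d unitary matrices, let (vₙ)ₙ be an orthonormal basis of ℂ^d and cₙ ≥ 0 with ∑ₙ cₙ = 1. For each n set ψₙ = a₀ • (e₀ ⊗ w₀.mulVec vₙ) + a₁ • (e₁ ⊗ w₁.mulVec vₙ), and let σ = ∑ₙ cₙ • Matrix.vecMulVec ψₙ (star ψₙ). Assume the strict orthogonality condition: for all n, m with cₙ ≠ 0 and cₘ ≠ 0, star (w₀.mulVec vₙ) ⬝ᵥ (w₁.mulVec vₘ) = 0. Let M be the partial transpose of σ with respect to the first factor, M((i,a),(j,b)) = σ((j,a),(i,b)). Then M is Hermitian and the sum of its negative eigenvalues equals −|a₀·a₁|; i.e. the negativity of the evolved qubit–environment state equals |a₀a₁|, independently of the dimension d and of the weights cₙ. -/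
/-!
Write `u = w₀ v`, `t = w₁ v` and `γ = ‖a₀ a₁‖`. The partial transpose of one branch
`|ψ⟩⟨ψ|` only moves its coherences:
`|a₀|² |e₀u⟩⟨e₀u| + |a₁|² |e₁t⟩⟨e₁t| + a₀ā₁ |e₁u⟩⟨e₀t| + ā₀a₁ |e₀t⟩⟨e₁u|`.
With a phase `φ` such that `φ γ = ā₀ a₁`, polarization turns the coherence part into
`(γ/2) (|χ₊⟩⟨χ₊| - |χ₋⟩⟨χ₋|)`, where `χ± = e₁ ⊗ u ± φ e₀ ⊗ t` (`crossVec (±φ) u t`).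
Summing over the ensemble gives `M = A - B` with `A, B ⪰ 0`. Strict orthogonality (`uₙ ⟂ tₘ`),
together with the orthonormality of each family, gives `A B = 0`, so `B` is the negative part
of `M` and the negativity is `tr B = γ ∑ cₙ = γ`.
-/

open Matrix ComplexOrder

/-- The Kronecker (tensor) product of two vectors: `(u ⊗ v) (i,a) = u i * v a`. -/
def vecKron {m n : Type*} (u : m → ℂ) (v : n → ℂ) : m × n → ℂ :=
  fun p => u p.1 * v p.2

variable {ι m n : Type*}

theorem star_vecKron_dotProduct_vecKron [Fintype m] [Fintype n] (p q : m → ℂ) (x y : n → ℂ) :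
    star (vecKron p x) ⬝ᵥ vecKron q y = (star p ⬝ᵥ q) * (star x ⬝ᵥ y) := by
  simp only [dotProduct, vecKron, Pi.star_apply, star_mul', Fintype.sum_prod_type,
    Finset.sum_mul_sum]
  exact Finset.sum_congr rfl fun _ _ => Finset.sum_congr rfl fun _ _ => by ring

theorem vecMulVec_mul_vecMulVec_eq_zero {R : Type*} [CommSemiring R] [StarRing R] [Fintype n]
    {x y : n → R} (z w : n → R) (h : star x ⬝ᵥ y = 0) :
    vecMulVec z (star x) * vecMulVec y w = 0 := by
  rw [vecMulVec_mul_vecMulVec, h, zero_smul, vecMulVec_zero]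

theorem star_mulVec_dotProduct_mulVec {R : Type*} [CommSemiring R] [StarRing R] [Fintype n]
    [DecidableEq n] {w : Matrix n n R} (hw : wᴴ * w = 1) (x y : n → R) :
    star (w *ᵥ x) ⬝ᵥ (w *ᵥ y) = star x ⬝ᵥ y := by
  rw [star_mulVec, ← dotProduct_mulVec, mulVec_mulVec, hw, one_mulVec]

theorem Finset.sum_smul_mul_sum_smul_eq_zero {R A : Type*} [Fintype ι] [CommSemiring R]
    [Semiring A] [Algebra R A] {c : ι → R} {X Y : ι → A}
    (h : ∀ i j, c i ≠ 0 → c j ≠ 0 → X i * Y j = 0) :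
    (∑ i, c i • X i) * (∑ j, c j • Y j) = 0 := by
  rw [Finset.sum_mul_sum]
  refine Finset.sum_eq_zero fun i _ => Finset.sum_eq_zero fun j _ => ?_
  rw [smul_mul_smul_comm]
  by_cases hi : c i = 0
  · rw [hi, zero_mul, zero_smul]
  by_cases hj : c j = 0
  · rw [hj, mul_zero, zero_smul]
  rw [h i j hi hj, smul_zero]

open scoped MatrixOrder in
theorem Matrix.IsHermitian.sum_min_eigenvalues_zero_eq_neg_re_trace {𝕜 : Type*} [RCLike 𝕜]
    [Fintype n] [DecidableEq n] {A P N : Matrix n n 𝕜} (hA : A.IsHermitian)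
    (hAPN : A = P - N) (hP : P.PosSemidef) (hN : N.PosSemidef) (hPN : P * N = 0) :
    ∑ i, min (hA.eigenvalues i) 0 = -RCLike.re N.trace := by
  obtain ⟨-, hN⟩ := CFC.posPart_negPart_unique hAPN hPN hP.nonneg hN.nonneg
  rw [← hN, CFC.negPart_def, cfcₙ_eq_cfc, hA.cfc_eq, IsHermitian.cfc, Unitary.conjStarAlgAut_apply,
    trace_mul_cycle, Unitary.coe_star_mul_self, one_mul, trace_diagonal, map_sum,
    ← Finset.sum_neg_distrib]
  refine Finset.sum_congr rfl fun i _ => ?_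
  rw [Function.comp_apply, Function.comp_apply, negPart_eq_neg_inf_zero, RCLike.ofReal_re, neg_neg]

def partialTransposeFst (m n : Type*) :
    Matrix (m × n) (m × n) ℂ →ₗ[ℂ] Matrix (m × n) (m × n) ℂ where
  toFun X p q := X (q.1, p.2) (p.1, q.2)
  map_add' _ _ := rfl
  map_smul' _ _ := rfl

@[simp]
theorem partialTransposeFst_apply (X : Matrix (m × n) (m × n) ℂ) (p q : m × n) :
    partialTransposeFst m n X p q = X (q.1, p.2) (p.1, q.2) := rfl

section Qubit

variable [Fintype n] (a₀ a₁ φ : ℂ) (x y : n → ℂ)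

local notation "e₀" => (Pi.single 0 1 : Fin 2 → ℂ)
local notation "e₁" => (Pi.single 1 1 : Fin 2 → ℂ)

def qubitState : Fin 2 × n → ℂ :=
  a₀ • vecKron e₀ x + a₁ • vecKron e₁ y

def crossVec : Fin 2 × n → ℂ :=
  vecKron e₁ x + φ • vecKron e₀ y

noncomputable def ptPosTerm : Matrix (Fin 2 × n) (Fin 2 × n) ℂ :=
  ‖a₀‖ ^ 2 • vecMulVec (vecKron e₀ x) (star (vecKron e₀ x))
    + ‖a₁‖ ^ 2 • vecMulVec (vecKron e₁ y) (star (vecKron e₁ y))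
    + (‖a₀ * a₁‖ / 2) • vecMulVec (crossVec φ x y) (star (crossVec φ x y))

noncomputable def ptNegTerm : Matrix (Fin 2 × n) (Fin 2 × n) ℂ :=
  (‖a₀ * a₁‖ / 2) • vecMulVec (crossVec (-φ) x y) (star (crossVec (-φ) x y))

theorem posSemidef_ptPosTerm : (ptPosTerm a₀ a₁ φ x y).PosSemidef := by
  unfold ptPosTerm
  refine ((posSemidef_vecMulVec_self_star _).smul ?_ |>.add
    ((posSemidef_vecMulVec_self_star _).smul ?_)).add ((posSemidef_vecMulVec_self_star _).smul ?_)
  all_goals positivity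

theorem posSemidef_ptNegTerm : (ptNegTerm a₀ a₁ φ x y).PosSemidef :=
  (posSemidef_vecMulVec_self_star _).smul (by positivity)

theorem partialTransposeFst_vecMulVec_qubitState :
    partialTransposeFst (Fin 2) n (vecMulVec (qubitState a₀ a₁ x y) (star (qubitState a₀ a₁ x y)))
      = ‖a₀‖ ^ 2 • vecMulVec (vecKron e₀ x) (star (vecKron e₀ x))
        + ‖a₁‖ ^ 2 • vecMulVec (vecKron e₁ y) (star (vecKron e₁ y))
        + (a₀ * star a₁) • vecMulVec (vecKron e₁ x) (star (vecKron e₀ y))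
        + (star a₀ * a₁) • vecMulVec (vecKron e₀ y) (star (vecKron e₁ x)) := by
  ext ⟨i, a⟩ ⟨j, b⟩
  fin_cases i <;> fin_cases j <;>
    simp [qubitState, vecKron, vecMulVec_apply, ← Complex.conj_mul', Complex.real_smul] <;> ring

theorem vecMulVec_add_smul_sub_vecMulVec_add_neg_smul (u w : n → ℂ) :
    vecMulVec (u + φ • w) (star (u + φ • w)) - vecMulVec (u + (-φ) • w) (star (u + (-φ) • w))
      = (2 * star φ) • vecMulVec u (star w) + (2 * φ) • vecMulVec w (star u) := by
  ext i j
  simp only [star_add, star_smul, RCLike.star_def, neg_smul, star_neg, Matrix.sub_apply,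
    vecMulVec_apply, Pi.add_apply, Pi.smul_apply, smul_eq_mul, Pi.star_apply, Pi.neg_apply,
    Matrix.add_apply, Matrix.smul_apply]
  ring

theorem partialTransposeFst_vecMulVec_qubitState_eq_sub (hφ : φ * ‖a₀ * a₁‖ = star a₀ * a₁) :
    partialTransposeFst (Fin 2) n (vecMulVec (qubitState a₀ a₁ x y) (star (qubitState a₀ a₁ x y)))
      = ptPosTerm a₀ a₁ φ x y - ptNegTerm a₀ a₁ φ x y := by
  have hφ' : star φ * ‖a₀ * a₁‖ = a₀ * star a₁ := by
    simpa [star_mul'] using congrArg star hφ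
  rw [partialTransposeFst_vecMulVec_qubitState, ptPosTerm, ptNegTerm, add_sub_assoc, ← smul_sub,
    crossVec, crossVec, vecMulVec_add_smul_sub_vecMulVec_add_neg_smul]
  linear_combination (norm := module) (-hφ') • vecMulVec (vecKron e₁ x) (star (vecKron e₀ y))
    - hφ • vecMulVec (vecKron e₀ y) (star (vecKron e₁ x))

variable {x y}

theorem star_vecKron_zero_dotProduct_crossVec (x' y' : n → ℂ) :
    star (vecKron e₀ x) ⬝ᵥ crossVec φ x' y' = φ * (star x ⬝ᵥ y') := by
  simp [crossVec, dotProduct_add, star_vecKron_dotProduct_vecKron]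

theorem star_vecKron_one_dotProduct_crossVec (x' y' : n → ℂ) :
    star (vecKron e₁ y) ⬝ᵥ crossVec φ x' y' = star y ⬝ᵥ x' := by
  simp [crossVec, dotProduct_add, star_vecKron_dotProduct_vecKron]

theorem star_crossVec_dotProduct_crossVec (ψ : ℂ) (x' y' : n → ℂ) :
    star (crossVec φ x y) ⬝ᵥ crossVec ψ x' y' = star x ⬝ᵥ x' + star φ * ψ * (star y ⬝ᵥ y') := by
  simp [crossVec, dotProduct_add, add_dotProduct, star_vecKron_dotProduct_vecKron, mul_assoc,
    mul_left_comm]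

theorem ptPosTerm_mul_ptNegTerm_eq_zero (hφ : ‖φ‖ = 1) {x' y' : n → ℂ}
    (hxy' : star x ⬝ᵥ y' = 0) (hx'y : star x' ⬝ᵥ y = 0) (hxx' : star x ⬝ᵥ x' = star y ⬝ᵥ y') :
    ptPosTerm a₀ a₁ φ x y * ptNegTerm a₀ a₁ φ x' y' = 0 := by
  have h₀ : star (vecKron e₀ x) ⬝ᵥ crossVec (-φ) x' y' = 0 := by
    rw [star_vecKron_zero_dotProduct_crossVec, hxy', mul_zero]
  have h₁ : star (vecKron e₁ y) ⬝ᵥ crossVec (-φ) x' y' = 0 := by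
    rw [star_vecKron_one_dotProduct_crossVec, ← star_star x', star_dotProduct_star, hx'y, star_zero]
  have hφφ : star φ * -φ = -1 := by
    rw [mul_neg, Complex.star_def, Complex.conj_mul', hφ]; norm_num
  have h₂ : star (crossVec φ x y) ⬝ᵥ crossVec (-φ) x' y' = 0 := by
    rw [star_crossVec_dotProduct_crossVec, hφφ, hxx']; ring
  simp only [ptPosTerm, ptNegTerm, add_mul, smul_mul_smul_comm,
    vecMulVec_mul_vecMulVec_eq_zero _ _ h₀, vecMulVec_mul_vecMulVec_eq_zero _ _ h₁,
    vecMulVec_mul_vecMulVec_eq_zero _ _ h₂, smul_zero, add_zero]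

theorem trace_ptNegTerm (hφ : ‖φ‖ = 1) (hx : star x ⬝ᵥ x = 1) (hy : star y ⬝ᵥ y = 1) :
    (ptNegTerm a₀ a₁ φ x y).trace = ‖a₀ * a₁‖ := by
  have hφφ : star (-φ) * -φ = 1 := by
    rw [Complex.star_def, Complex.conj_mul', norm_neg, hφ]; norm_num
  rw [ptNegTerm, trace_smul, trace_vecMulVec, dotProduct_comm, star_crossVec_dotProduct_crossVec,
    hφφ, hx, hy, Complex.real_smul]
  push_cast
  ring

end Qubit

theorem stmt_15_general {d : ℕ} (a₀ a₁ : ℂ)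
    (w₀ w₁ : Matrix (Fin d) (Fin d) ℂ) (hw₀ : w₀ᴴ * w₀ = 1) (hw₁ : w₁ᴴ * w₁ = 1)
    (v : Fin d → (Fin d → ℂ))
    (hv : ∀ n m, star (v n) ⬝ᵥ v m = if n = m then 1 else 0)
    (c : Fin d → ℝ) (hc : ∀ n, 0 ≤ c n) (hcsum : ∑ n, c n = 1)
    (horth : ∀ n m, c n ≠ 0 → c m ≠ 0 →
      star (w₀.mulVec (v n)) ⬝ᵥ (w₁.mulVec (v m)) = 0) :
    let ψ : Fin d → (Fin 2 × Fin d → ℂ) := fun n =>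
      a₀ • vecKron (Pi.single 0 1 : Fin 2 → ℂ) (w₀.mulVec (v n))
        + a₁ • vecKron (Pi.single 1 1 : Fin 2 → ℂ) (w₁.mulVec (v n))
    let σ : Matrix (Fin 2 × Fin d) (Fin 2 × Fin d) ℂ :=
      ∑ n, (c n : ℂ) • Matrix.vecMulVec (ψ n) (star (ψ n))
    let M : Matrix (Fin 2 × Fin d) (Fin 2 × Fin d) ℂ := fun p q => σ (q.1, p.2) (p.1, q.2)
    ∃ hM : M.IsHermitian,
      ∑ k, min (hM.eigenvalues k) 0 = -(‖a₀ * a₁‖) := by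
  intro ψ σ M
  obtain ⟨φ, hφ, hφa⟩ := Complex.exists_norm_mul_eq_self (star a₀ * a₁)
  rw [norm_mul, norm_star, ← norm_mul] at hφa
  set A := ∑ n, (c n : ℂ) • ptPosTerm a₀ a₁ φ (w₀ *ᵥ v n) (w₁ *ᵥ v n)
  set B := ∑ n, (c n : ℂ) • ptNegTerm a₀ a₁ φ (w₀ *ᵥ v n) (w₁ *ᵥ v n)
  have hMAB : M = A - B := by
    change partialTransposeFst (Fin 2) (Fin d) σ = A - B
    simp only [σ, ψ, map_sum, map_smul, ← qubitState.eq_def,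
      partialTransposeFst_vecMulVec_qubitState_eq_sub _ _ _ _ _ hφa, smul_sub,
      Finset.sum_sub_distrib, A, B]
  have hA : A.PosSemidef := posSemidef_sum _ fun n _ =>
    (posSemidef_ptPosTerm _ _ _ _ _).smul (Complex.zero_le_real.mpr (hc n))
  have hB : B.PosSemidef := posSemidef_sum _ fun n _ =>
    (posSemidef_ptNegTerm _ _ _ _ _).smul (Complex.zero_le_real.mpr (hc n))
  have hAB : A * B = 0 := Finset.sum_smul_mul_sum_smul_eq_zero fun n m hn hm =>
    ptPosTerm_mul_ptNegTerm_eq_zero _ _ _ hφ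
      (horth n m (Complex.ofReal_ne_zero.mp hn) (Complex.ofReal_ne_zero.mp hm))
      (horth m n (Complex.ofReal_ne_zero.mp hm) (Complex.ofReal_ne_zero.mp hn))
      (by rw [star_mulVec_dotProduct_mulVec hw₀, star_mulVec_dotProduct_mulVec hw₁])
  have hQ (n : Fin d) : (ptNegTerm a₀ a₁ φ (w₀ *ᵥ v n) (w₁ *ᵥ v n)).trace = ‖a₀ * a₁‖ :=
    trace_ptNegTerm _ _ _ hφ (by rw [star_mulVec_dotProduct_mulVec hw₀, hv, if_pos rfl])
      (by rw [star_mulVec_dotProduct_mulVec hw₁, hv, if_pos rfl])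
  have htrB : B.trace = ‖a₀ * a₁‖ := by
    simp only [B, trace_sum, trace_smul, hQ, smul_eq_mul, ← Finset.sum_mul, ← Complex.ofReal_sum,
      hcsum, Complex.ofReal_one, one_mul]
  refine ⟨hMAB ▸ hA.isHermitian.sub hB.isHermitian, ?_⟩
  rw [IsHermitian.sum_min_eigenvalues_zero_eq_neg_re_trace _ hMAB hA hB hAB, htrB,
    RCLike.re_to_complex, Complex.ofReal_re]

/-- Strict distinguishability forces maximal negativity: for the evolved joint state
`σ = ∑ₙ cₙ |ψₙ⟩⟨ψₙ|` with `ψₙ = a₀ (e₀ ⊗ w₀ vₙ) + a₁ (e₁ ⊗ w₁ vₙ)`, where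
`|a₀|² + |a₁|² = 1`, `(vₙ)` is an orthonormal basis of `ℂ^d`, `cₙ ≥ 0` sum to 1,
`w₀, w₁` are unitary, and the strict orthogonality condition holds, the partial
transpose of `σ` with respect to the qubit factor is Hermitian and the sum of its
negative eigenvalues is `-|a₀ a₁|`: the negativity equals `|a₀ a₁|`, independently
of `d` and of the weights `cₙ`. -/
theorem stmt_15 {d : ℕ} (a₀ a₁ : ℂ)
    (hnorm : ‖a₀‖ ^ 2 + ‖a₁‖ ^ 2 = 1)
    (w₀ w₁ : Matrix (Fin d) (Fin d) ℂ) (hw₀ : w₀ᴴ * w₀ = 1) (hw₁ : w₁ᴴ * w₁ = 1)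
    (v : Fin d → (Fin d → ℂ))
    (hv : ∀ n m, star (v n) ⬝ᵥ v m = if n = m then 1 else 0)
    (c : Fin d → ℝ) (hc : ∀ n, 0 ≤ c n) (hcsum : ∑ n, c n = 1)
    (horth : ∀ n m, c n ≠ 0 → c m ≠ 0 →
      star (w₀.mulVec (v n)) ⬝ᵥ (w₁.mulVec (v m)) = 0) :
    let ψ : Fin d → (Fin 2 × Fin d → ℂ) := fun n =>
      a₀ • vecKron (Pi.single 0 1 : Fin 2 → ℂ) (w₀.mulVec (v n))
        + a₁ • vecKron (Pi.single 1 1 : Fin 2 → ℂ) (w₁.mulVec (v n))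
    let σ : Matrix (Fin 2 × Fin d) (Fin 2 × Fin d) ℂ :=
      ∑ n, (c n : ℂ) • Matrix.vecMulVec (ψ n) (star (ψ n))
    let M : Matrix (Fin 2 × Fin d) (Fin 2 × Fin d) ℂ := fun p q => σ (q.1, p.2) (p.1, q.2)
    ∃ hM : M.IsHermitian,
      ∑ k, min (hM.eigenvalues k) 0 = -(‖a₀ * a₁‖) :=
  stmt_15_general a₀ a₁ w₀ w₁ hw₀ hw₁ v hv c hc hcsum horth
end
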